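/- Fix μ ∈ ℝ and c ∈ ℝ with μ > c. Then P(μ, σ, c) tends to 1 as σ tends to 0 from above. -/
import Mathlib


open Real MeasureTheory Filter Topology

/-- Standard normal density φ(x) = exp(-x²/2)/√(2π). -/
noncomputable def stdPdf (x : ℝ) : ℝ := Real.exp (-(x ^ 2) / 2) / Real.sqrt (2 * Real.pi)

/-- Standard normal CDF Φ(x) = ∫_{-∞}^x φ(u) du. -/
noncomputable def stdCdf (x : ℝ) : ℝ := ∫ u in Set.Iio x, stdPdf u

/-- P(μ, σ, c): probability that an agent with prior N(μ, σ²) and link cost c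
is never ostracized (Proposition 1). -/
noncomputable def Pstay (μ σ c : ℝ) : ℝ :=
  ∫ q in Set.Ioi c, (1 - Real.exp (-(2 / σ ^ 2) * (μ - c) * (q - c))) * stdPdf ((q - μ) / σ) / σ

lemma stdPdf_integrable : Integrable stdPdf := by
  have h : Integrable (fun x : ℝ => Real.exp (-(1/2 : ℝ) * x ^ 2)) :=
    integrable_exp_neg_mul_sq (by norm_num)
  have := h.div_const (Real.sqrt (2 * Real.pi))
  refine this.congr ?_
  filter_upwards with x
  unfold stdPdf
  ring_nf

lemma integral_stdPdf : ∫ x, stdPdf x = 1 := by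
  unfold stdPdf
  rw [integral_div]
  have h : ∫ x : ℝ, Real.exp (-(x ^ 2) / 2) = Real.sqrt (2 * Real.pi) := by
    have h0 := integral_gaussian (2⁻¹ : ℝ)
    rw [show (Real.pi / (2⁻¹ : ℝ)) = 2 * Real.pi by ring] at h0
    rw [← h0]
    congr 1 with x
    ring_nf
  rw [h, div_self (by positivity)]

/-- translation over `Ioi` -/
lemma integral_Ioi_sub (F : ℝ → ℝ) (a m : ℝ) :
    ∫ q in Set.Ioi a, F (q - m) = ∫ x in Set.Ioi (a - m), F x := by
  have h₁ : MeasurePreserving (fun x : ℝ => x + (-m)) volume volume :=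
    measurePreserving_add_right volume (-m)
  have h₂ : MeasurableEmbedding (fun x : ℝ => x + (-m)) :=
    measurableEmbedding_addRight (-m)
  have := h₁.setIntegral_preimage_emb h₂ F (Set.Ioi (a - m))
  rw [Set.preimage_add_const_Ioi] at this
  simp only [sub_neg_eq_add, sub_eq_add_neg] at this ⊢
  rw [← this]
  norm_num

/-- affine change-of-variables for the Gaussian integral over `Ioi`. -/
lemma integral_Ioi_affine (a m : ℝ) {σ : ℝ} (hσ : 0 < σ) :
    ∫ q in Set.Ioi a, stdPdf ((q - m) / σ) / σ = ∫ x in Set.Ioi ((a - m) / σ), stdPdf x := by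
  rw [integral_div, integral_Ioi_sub (fun y => stdPdf (y / σ)) a m]
  have h := integral_comp_mul_left_Ioi stdPdf (a - m) (b := σ⁻¹) (inv_pos.mpr hσ)
  simp only [smul_eq_mul, inv_inv] at h
  have : ∫ x in Set.Ioi (a - m), stdPdf (x / σ) = ∫ x in Set.Ioi (a - m), stdPdf (σ⁻¹ * x) := by
    congr 1 with x
    rw [div_eq_inv_mul]
  rw [this, h, inv_mul_eq_div, mul_div_cancel_left₀ _ hσ.ne']

lemma integrableOn_affine (m : ℝ) {σ : ℝ} (hσ : 0 < σ) (s : Set ℝ) :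
    IntegrableOn (fun q => stdPdf ((q - m) / σ) / σ) s := by
  have h1 : Integrable (fun x : ℝ => stdPdf (x / σ)) := stdPdf_integrable.comp_div hσ.ne'
  have h2 : Integrable (fun q : ℝ => stdPdf ((q - m) / σ)) := h1.comp_sub_right m
  exact (h2.div_const σ).integrableOn

lemma exp_mul_stdPdf (μ c q : ℝ) {σ : ℝ} (hσ : 0 < σ) :
    Real.exp (-(2 / σ ^ 2) * (μ - c) * (q - c)) * stdPdf ((q - μ) / σ)
      = stdPdf ((q - (2 * c - μ)) / σ) := by
  unfold stdPdf
  rw [← mul_div_assoc, ← Real.exp_add]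
  congr 1
  field_simp
  ring

lemma Pstay_eq (μ c : ℝ) {σ : ℝ} (hσ : 0 < σ) :
    Pstay μ σ c = (∫ x in Set.Ioi ((c - μ) / σ), stdPdf x)
      - ∫ x in Set.Ioi ((μ - c) / σ), stdPdf x := by
  unfold Pstay
  have hptwise : ∀ q : ℝ,
      (1 - Real.exp (-(2 / σ ^ 2) * (μ - c) * (q - c))) * stdPdf ((q - μ) / σ) / σ
        = stdPdf ((q - μ) / σ) / σ - stdPdf ((q - (2 * c - μ)) / σ) / σ := by
    intro q
    rw [sub_mul, one_mul, sub_div, exp_mul_stdPdf μ c q hσ]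
  simp_rw [hptwise]
  rw [integral_sub (integrableOn_affine μ hσ _) (integrableOn_affine (2 * c - μ) hσ _),
    integral_Ioi_affine c μ hσ, integral_Ioi_affine c (2 * c - μ) hσ]
  norm_num
  congr 2
  ring

/-- P(μ, σ, c) → 1 as σ → 0⁺, for μ > c. -/
theorem stmt_5 (μ c : ℝ) (hμ : μ > c) :
    Tendsto (fun σ : ℝ => Pstay μ σ c) (𝓝[>] 0) (𝓝 1) := by
  have hinv : Tendsto (fun σ : ℝ => σ⁻¹) (𝓝[>] (0 : ℝ)) atTop := tendsto_inv_nhdsGT_zero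
  have t1 : Tendsto (fun σ : ℝ => (c - μ) / σ) (𝓝[>] (0 : ℝ)) atBot := by
    simp_rw [div_eq_mul_inv]
    exact Tendsto.const_mul_atTop_of_neg (by linarith) hinv
  have t2 : Tendsto (fun σ : ℝ => (μ - c) / σ) (𝓝[>] (0 : ℝ)) atTop := by
    simp_rw [div_eq_mul_inv]
    exact Tendsto.const_mul_atTop (by linarith) hinv
  -- first piece tends to 1
  have A : Tendsto (fun σ : ℝ => ∫ x in Set.Ioi ((c - μ) / σ), stdPdf x)
      (𝓝[>] (0 : ℝ)) (𝓝 1) := by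
    have := (MeasureTheory.aecover_Ioi (μ := (volume : Measure ℝ)) t1).integral_tendsto_of_countably_generated
      stdPdf_integrable
    rwa [integral_stdPdf] at this
  -- second piece: ∫ Iic ((μ-c)/σ) → 1, hence ∫ Ioi → 0
  have BIic : Tendsto (fun σ : ℝ => ∫ x in Set.Iic ((μ - c) / σ), stdPdf x)
      (𝓝[>] (0 : ℝ)) (𝓝 1) := by
    have := (MeasureTheory.aecover_Iic (μ := (volume : Measure ℝ)) t2).integral_tendsto_of_countably_generated
      stdPdf_integrable
    rwa [integral_stdPdf] at this
  have hIoi_eq : ∀ b : ℝ, (∫ x in Set.Ioi b, stdPdf x) = 1 - ∫ x in Set.Iic b, stdPdf x := by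
    intro b
    have := intervalIntegral.integral_Iic_add_Ioi (b := b) stdPdf_integrable.integrableOn
      stdPdf_integrable.integrableOn
    rw [integral_stdPdf] at this
    linarith
  have B : Tendsto (fun σ : ℝ => ∫ x in Set.Ioi ((μ - c) / σ), stdPdf x)
      (𝓝[>] (0 : ℝ)) (𝓝 0) := by
    simp_rw [hIoi_eq]
    have := (tendsto_const_nhds (x := (1 : ℝ)) (f := 𝓝[>] (0:ℝ))).sub BIic
    simpa using this
  have final := A.sub B
  rw [sub_zero] at final
  refine final.congr' ?_
  filter_upwards [self_mem_nhdsWithin] with σ hσ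
  exact (Pstay_eq μ c hσ).symm
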